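/- Let T = ℤ[s,t]/(s² − 2s, t² − 4t, st − 2t). For all integers a, b, c, the identity (a·t + b·s + c)·(−t + 3s − 2) = −2b·(t − 2s) + c·(−t + 3s − 2) holds in T. In particular, every element of the principal ideal of T generated by −t + 3s − 2 is a ℤ-linear combination of t − 2s and −t + 3s − 2. -/

import Mathlib

open MvPolynomial

noncomputable section

/-- Presentation of the Burnside ring `A(C₄) = ℤ[s,t]/(s² - 2s, t² - 4t, st - 2t)`,
with `X 0 = s = [C₄/C₂]` and `X 1 = t = [C₄/e]`. -/
def relT : Ideal (MvPolynomial (Fin 2) ℤ) :=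
  Ideal.span {X 0 ^ 2 - 2 * X 0, X 1 ^ 2 - 4 * X 1, X 0 * X 1 - 2 * X 1}

abbrev T : Type := MvPolynomial (Fin 2) ℤ ⧸ relT

def sT : T := Ideal.Quotient.mk relT (X 0)
def tT : T := Ideal.Quotient.mk relT (X 1)

lemma hs : sT * sT = 2 * sT := by
  have : Ideal.Quotient.mk relT (X 0 ^ 2 - 2 * X 0) = 0 := by
    rw [Ideal.Quotient.eq_zero_iff_mem]
    exact Ideal.subset_span (by simp)
  have := sub_eq_zero.mp (by simpa using this)
  simpa [sT, sq, map_mul, map_pow, map_ofNat] using this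

lemma ht : tT * tT = 4 * tT := by
  have : Ideal.Quotient.mk relT (X 1 ^ 2 - 4 * X 1) = 0 := by
    rw [Ideal.Quotient.eq_zero_iff_mem]
    exact Ideal.subset_span (by simp)
  have := sub_eq_zero.mp (by simpa using this)
  simpa [tT, sq, map_mul, map_pow, map_ofNat] using this

lemma hst : sT * tT = 2 * tT := by
  have : Ideal.Quotient.mk relT (X 0 * X 1 - 2 * X 1) = 0 := by
    rw [Ideal.Quotient.eq_zero_iff_mem]
    exact Ideal.subset_span (by simp)
  have := sub_eq_zero.mp (by simpa using this)
  simpa [sT, tT, map_mul, map_ofNat] using this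

set_option maxHeartbeats 1000000 in
lemma key : ∀ y : T, ∃ m n : ℤ,
    y * (-tT + 3 * sT - 2) = (m : T) * (tT - 2 * sT) + (n : T) * (-tT + 3 * sT - 2) := by
  intro y
  obtain ⟨p, rfl⟩ := Ideal.Quotient.mk_surjective y
  induction p using MvPolynomial.induction_on with
  | C a =>
    refine ⟨0, a, ?_⟩
    have : Ideal.Quotient.mk relT (C a) = (a : T) := by simp
    rw [this]
    push_cast
    ring
  | add p q hp hq =>
    obtain ⟨m1, n1, e1⟩ := hp
    obtain ⟨m2, n2, e2⟩ := hq
    refine ⟨m1 + m2, n1 + n2, ?_⟩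
    rw [map_add, add_mul, e1, e2]
    push_cast
    ring
  | mul_X p i hp =>
    obtain ⟨m, n, e⟩ := hp
    fin_cases i
    · refine ⟨2 * m - 2 * n, 0, ?_⟩
      have : Ideal.Quotient.mk relT (p * X 0) * (-tT + 3 * sT - 2)
          = sT * (Ideal.Quotient.mk relT p * (-tT + 3 * sT - 2)) := by
        rw [map_mul, show Ideal.Quotient.mk relT (X 0) = sT from rfl]; ring
      show Ideal.Quotient.mk relT (p * X 0) * (-tT + 3 * sT - 2) = _
      rw [this, e]
      push_cast
      linear_combination ((m : T) - (n : T)) * hst + (3 * (n : T) - 2 * (m : T)) * hs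
    · refine ⟨0, 0, ?_⟩
      have : Ideal.Quotient.mk relT (p * X 1) * (-tT + 3 * sT - 2)
          = tT * (Ideal.Quotient.mk relT p * (-tT + 3 * sT - 2)) := by
        rw [map_mul, show Ideal.Quotient.mk relT (X 1) = tT from rfl]; ring
      show Ideal.Quotient.mk relT (p * X 1) * (-tT + 3 * sT - 2) = _
      rw [this, e]
      push_cast
      linear_combination ((m : T) - (n : T)) * ht + (3 * (n : T) - 2 * (m : T)) * hst

theorem stmt5 :
    (∀ a b c : ℤ,
      ((a : T) * tT + (b : T) * sT + (c : T)) * (-tT + 3 * sT - 2) =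
        (-2 * b : ℤ) * (tT - 2 * sT) + (c : T) * (-tT + 3 * sT - 2)) ∧
    (∀ x ∈ Ideal.span ({-tT + 3 * sT - 2} : Set T),
      ∃ m n : ℤ, x = (m : T) * (tT - 2 * sT) + (n : T) * (-tT + 3 * sT - 2)) := by
  constructor
  · intro a b c
    push_cast
    linear_combination (-(a : T)) * ht + (3 * (a : T) - (b : T)) * hst + 3 * (b : T) * hs
  · intro x hx
    rw [Ideal.mem_span_singleton] at hx
    obtain ⟨y, rfl⟩ := hx
    obtain ⟨m, n, e⟩ := key y
    exact ⟨m, n, by rw [mul_comm]; exact e⟩
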